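/- arXiv:2301.08818 — 5 statements merged into one kernel-verified Lean document; each statement's English description precedes it below -/
import Mathlib

section
/- Let A be an n×n complex matrix of index k and let m ≥ 1 be an integer. Then the m-weak core inverse satisfies A^{#_m} = (A^w)^m A^{m-1} P_{A^m}, where A^w = (A⊕)^2 A is the weak group inverse of A; in particular (A^w)^m = (A⊕)^{m+1} A. -/
/-! Since `X A X = X` for the core-EP inverse `X` of `A`, every factor `A X` standing right of a
power of `X` can be absorbed, `X^(j+1) A X = X^(j+1)`; this collapses `(X² A)^(m+1)` to
`X^(m+2) A`, and both identities follow. -/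

open Matrix

/-- `X` is the Moore–Penrose inverse of `A` (four Penrose equations). -/
def MoorePenroseOf {n : ℕ} (A X : Matrix (Fin n) (Fin n) ℂ) : Prop :=
  A * X * A = A ∧ X * A * X = X ∧ (A * X)ᴴ = A * X ∧ (X * A)ᴴ = X * A

/-- Column space of a square complex matrix. -/
noncomputable def colSpace {n : ℕ} (A : Matrix (Fin n) (Fin n) ℂ) : Submodule ℂ (Fin n → ℂ) :=
  LinearMap.range A.mulVecLin

/-- Null space of a square complex matrix. -/
noncomputable def nullSpace {n : ℕ} (A : Matrix (Fin n) (Fin n) ℂ) : Submodule ℂ (Fin n → ℂ) :=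
  LinearMap.ker A.mulVecLin

/-- `k` is the index of `A`: the smallest nonnegative integer with
`rank(A^k) = rank(A^(k+1))`. -/
def HasIndex {n : ℕ} (A : Matrix (Fin n) (Fin n) ℂ) (k : ℕ) : Prop :=
  (A ^ k).rank = (A ^ (k + 1)).rank ∧ ∀ j < k, (A ^ j).rank ≠ (A ^ (j + 1)).rank

/-- `X` is the core-EP inverse of `A` (where `k = Ind(A)`): `XAX = X` and
`R(X) = R(Xᴴ) = R(A^k)`. -/
def IsCoreEP {n : ℕ} (A X : Matrix (Fin n) (Fin n) ℂ) (k : ℕ) : Prop :=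
  X * A * X = X ∧ colSpace X = colSpace (A ^ k) ∧ colSpace Xᴴ = colSpace (A ^ k)

section OuterInverse

variable {M : Type*} [Monoid M] {a x : M}

theorem pow_succ_mul_mul_eq_pow_succ (hx : x * a * x = x) (j : ℕ) :
    x ^ (j + 1) * a * x = x ^ (j + 1) := by
  rw [pow_succ, mul_assoc _ x, mul_assoc, hx]

theorem sq_mul_pow_succ (hx : x * a * x = x) (m : ℕ) :
    (x ^ 2 * a) ^ (m + 1) = x ^ (m + 2) * a := by
  induction m with
  | zero => simp
  | succ m ih =>
    calc (x ^ 2 * a) ^ (m + 2) = x ^ (m + 2) * a * x * (x * a) := by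
          rw [pow_succ, ih, sq]; simp only [mul_assoc]
      _ = x ^ (m + 3) * a := by
          rw [pow_succ_mul_mul_eq_pow_succ hx, pow_succ _ (m + 2), mul_assoc]

theorem sq_mul_pow_succ_mul_pow (hx : x * a * x = x) (m : ℕ) :
    (x ^ 2 * a) ^ (m + 1) * a ^ m = x ^ (m + 2) * a ^ (m + 1) := by
  rw [sq_mul_pow_succ hx, mul_assoc, ← pow_succ']

end OuterInverse

theorem stmt_0_general {n k m : ℕ} (hm : 1 ≤ m)
    (A CEP AmDag : Matrix (Fin n) (Fin n) ℂ)
    (hCEP : IsCoreEP A CEP k) :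
    CEP ^ (m + 1) * A ^ m * (A ^ m * AmDag) =
      (CEP ^ 2 * A) ^ m * A ^ (m - 1) * (A ^ m * AmDag) ∧
    (CEP ^ 2 * A) ^ m = CEP ^ (m + 1) * A := by
  obtain ⟨m, rfl⟩ := Nat.exists_eq_add_of_le' hm
  rw [Nat.add_sub_cancel, sq_mul_pow_succ_mul_pow hCEP.1]
  exact ⟨rfl, sq_mul_pow_succ hCEP.1 m⟩

/-- `A^{#_m} = (A^w)^m A^{m-1} P_{A^m}` where `A^w = (A⊕)^2 A`;
in particular `(A^w)^m = (A⊕)^{m+1} A`. -/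
theorem stmt_0 {n k m : ℕ} (hm : 1 ≤ m)
    (A CEP AmDag : Matrix (Fin n) (Fin n) ℂ)
    (hInd : HasIndex A k)
    (hCEP : IsCoreEP A CEP k)
    (hMP : MoorePenroseOf (A ^ m) AmDag) :
    CEP ^ (m + 1) * A ^ m * (A ^ m * AmDag) =
      (CEP ^ 2 * A) ^ m * A ^ (m - 1) * (A ^ m * AmDag) ∧
    (CEP ^ 2 * A) ^ m = CEP ^ (m + 1) * A :=
  stmt_0_general hm A CEP AmDag hCEP
end

section
/- Let A be an n×n complex matrix of index k and let m ≥ 1 be an integer. If Y is an n×n complex matrix satisfying YAY = Y and R(Y) = R(A^k), then A^{#_m} = Y A A^{#_m}. -/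
/-
The column space of `A^{#_m} = A⊕ · (A⊕)^m A^m P_{A^m}` lies in `R(A⊕) = R(A^k) = R(Y)`, and
`YAY = Y` says that `YA` acts as the identity on `R(Y)`.
-/

open Matrix

lemma colSpace_mul_le {n : ℕ} (B C : Matrix (Fin n) (Fin n) ℂ) :
    colSpace (B * C) ≤ colSpace B := by
  rw [colSpace, colSpace, mulVecLin_mul]
  exact LinearMap.range_comp_le_range _ _

lemma mul_mul_eq_self_of_colSpace_le {n : ℕ} {Y A M : Matrix (Fin n) (Fin n) ℂ}
    (hY : Y * A * Y = Y) (hM : colSpace M ≤ colSpace Y) :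
    Y * A * M = M := by
  refine toLin'.injective (LinearMap.ext fun v => ?_)
  obtain ⟨w, hw⟩ := hM ⟨v, rfl⟩
  change Y *ᵥ w = M *ᵥ v at hw
  change (Y * A * M) *ᵥ v = M *ᵥ v
  rw [← mulVec_mulVec, ← hw, mulVec_mulVec, hY]

theorem stmt_3_general {n k m : ℕ}
    (A CEP AmDag Y : Matrix (Fin n) (Fin n) ℂ)
    (hCEP : IsCoreEP A CEP k)
    (hY1 : Y * A * Y = Y)
    (hY2 : colSpace Y = colSpace (A ^ k)) :
    CEP ^ (m + 1) * A ^ m * (A ^ m * AmDag) =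
      Y * A * (CEP ^ (m + 1) * A ^ m * (A ^ m * AmDag)) := by
  have hfactor : CEP ^ (m + 1) * A ^ m * (A ^ m * AmDag) =
      CEP * (CEP ^ m * A ^ m * (A ^ m * AmDag)) := by
    rw [pow_succ']
    simp only [mul_assoc]
  have hcol : colSpace (CEP ^ (m + 1) * A ^ m * (A ^ m * AmDag)) ≤ colSpace Y := by
    rw [hY2, ← hCEP.2.1, hfactor]
    exact colSpace_mul_le _ _
  exact (mul_mul_eq_self_of_colSpace_le hY1 hcol).symm

/-- if `YAY = Y` and `R(Y) = R(A^k)` then `A^{#_m} = Y A A^{#_m}`. -/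
theorem stmt_3 {n k m : ℕ} (hm : 1 ≤ m)
    (A CEP AmDag Y : Matrix (Fin n) (Fin n) ℂ)
    (hInd : HasIndex A k)
    (hCEP : IsCoreEP A CEP k)
    (hMP : MoorePenroseOf (A ^ m) AmDag)
    (hY1 : Y * A * Y = Y)
    (hY2 : colSpace Y = colSpace (A ^ k)) :
    CEP ^ (m + 1) * A ^ m * (A ^ m * AmDag) =
      Y * A * (CEP ^ (m + 1) * A ^ m * (A ^ m * AmDag)) :=
  stmt_3_general A CEP AmDag Y hCEP hY1 hY2
end

section
/- Let A be an n×n complex matrix of index k and let m ≥ 1 be an integer. Then A^{#_m} A A^{#_m} = A^{#_m}, i.e., the m-weak core inverse is an outer inverse of A. -/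
/-!
Write `X = A⊕` and `Q = P_{A^m}`. Besides `XAX = X`, two identities hold: `AX² = X`, because `AX`
is idempotent and has the same column space as `X` (`A` maps `R(A^k)` onto itself), and `QX = X`,
because `R(X) = R(A^k) ⊆ R(A^m)`. From these alone the claim is monoid algebra:
`AX^{m+1} = X^m` and `A^m X^m = AX` collapse `W A W` to `W` for `W = X^{m+1} A^m Q`.
-/

open Matrix

/-- With `X = A⊕` and `Q = P_{A^m}` this is the `m`-weak core inverse `A^{#_m}`. -/
def weakCoreForm {M : Type*} [Monoid M] (X A Q : M) (m : ℕ) : M :=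
  X ^ (m + 1) * A ^ m * Q

section Monoid

variable {M : Type*} [Monoid M] {A X : M}

lemma mul_pow_add_two_of_mul_mul_self (h : A * X * X = X) (j : ℕ) :
    A * X ^ (j + 2) = X ^ (j + 1) := by
  rw [pow_succ' X (j + 1), pow_succ' X j, ← mul_assoc, ← mul_assoc, h]

lemma pow_succ_mul_pow_succ_of_mul_mul_self (h : A * X * X = X) (j : ℕ) :
    A ^ (j + 1) * X ^ (j + 1) = A * X := by
  induction j with
  | zero => simp
  | succ j ih =>
    rw [pow_succ A, mul_assoc, mul_pow_add_two_of_mul_mul_self h, ih]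

lemma weakCoreForm_mul_mul_self {Q : M} (hXAX : X * A * X = X) (hAXX : A * X * X = X)
    (hQX : Q * X = X) {m : ℕ} (hm : 0 < m) :
    weakCoreForm X A Q m * A * weakCoreForm X A Q m = weakCoreForm X A Q m := by
  obtain ⟨j, rfl⟩ := Nat.exists_eq_add_of_le' hm
  have hQXj : Q * X ^ (j + 1) = X ^ (j + 1) := by
    rw [pow_succ' X j, ← mul_assoc, hQX]
  unfold weakCoreForm
  calc X ^ (j + 1 + 1) * A ^ (j + 1) * Q * A * (X ^ (j + 1 + 1) * A ^ (j + 1) * Q)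
      = X ^ (j + 2) * A ^ (j + 1) * (Q * (A * X ^ (j + 2))) * A ^ (j + 1) * Q := by
        simp only [mul_assoc]
    _ = X ^ (j + 1) * (X * A * X) * A ^ (j + 1) * Q := by
        rw [mul_pow_add_two_of_mul_mul_self hAXX, hQXj, mul_assoc (X ^ (j + 2)),
          pow_succ_mul_pow_succ_of_mul_mul_self hAXX, pow_succ X (j + 1)]
        simp only [mul_assoc]
    _ = X ^ (j + 1 + 1) * A ^ (j + 1) * Q := by
        rw [hXAX, ← pow_succ]

end Monoid

section ColSpace

variable {n : ℕ}

lemma colSpace_mul (A B : Matrix (Fin n) (Fin n) ℂ) :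
    colSpace (A * B) = (colSpace B).map A.mulVecLin := by
  rw [colSpace, colSpace, Matrix.mulVecLin_mul, LinearMap.range_comp]

lemma exists_mul_eq_of_colSpace_le {B X : Matrix (Fin n) (Fin n) ℂ}
    (h : colSpace X ≤ colSpace B) : ∃ Y, B * Y = X := by
  obtain ⟨g, hg⟩ := Module.projective_lifting_property B.mulVecLin.rangeRestrict
    (X.mulVecLin.codRestrict (colSpace B) fun v => h ⟨v, rfl⟩)
    B.mulVecLin.surjective_rangeRestrict
  refine ⟨LinearMap.toMatrix' g, Matrix.toLin'.injective ?_⟩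
  rw [Matrix.toLin'_mul, Matrix.toLin'_toMatrix']
  refine LinearMap.ext fun v => ?_
  exact congrArg Subtype.val (LinearMap.congr_fun hg v)

lemma mul_mul_eq_of_colSpace_le {B C X : Matrix (Fin n) (Fin n) ℂ} (hB : B * C * B = B)
    (h : colSpace X ≤ colSpace B) : B * C * X = X := by
  obtain ⟨Y, rfl⟩ := exists_mul_eq_of_colSpace_le h
  rw [← mul_assoc, hB]

end ColSpace

section Index

variable {n k : ℕ} {A : Matrix (Fin n) (Fin n) ℂ}

lemma colSpace_pow_succ_eq_of_rank_eq (h : (A ^ k).rank = (A ^ (k + 1)).rank) :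
    colSpace (A ^ (k + 1)) = colSpace (A ^ k) := by
  refine Submodule.eq_of_le_of_finrank_eq ?_ h.symm
  rw [pow_succ, colSpace_mul]
  exact LinearMap.map_le_range

lemma colSpace_pow_add_eq_of_rank_eq (h : (A ^ k).rank = (A ^ (k + 1)).rank) (j : ℕ) :
    colSpace (A ^ (k + j)) = colSpace (A ^ k) := by
  induction j with
  | zero => rfl
  | succ j ih =>
    rw [← add_assoc, pow_succ', colSpace_mul, ih, ← colSpace_mul, ← pow_succ',
      colSpace_pow_succ_eq_of_rank_eq h]

lemma HasIndex.colSpace_le_pow (hInd : HasIndex A k) (m : ℕ) :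
    colSpace (A ^ k) ≤ colSpace (A ^ m) := by
  rcases le_total m k with hmk | hkm
  · obtain ⟨j, rfl⟩ := Nat.exists_eq_add_of_le hmk
    rw [pow_add, colSpace_mul]
    exact LinearMap.map_le_range
  · obtain ⟨j, rfl⟩ := Nat.exists_eq_add_of_le hkm
    exact (colSpace_pow_add_eq_of_rank_eq hInd.1 j).ge

lemma IsCoreEP.mul_mul_self {X : Matrix (Fin n) (Fin n) ℂ} (hInd : HasIndex A k)
    (hX : IsCoreEP A X k) : A * X * X = X := by
  have hidem : A * X * 1 * (A * X) = A * X := by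
    rw [mul_one, mul_assoc, ← mul_assoc X, hX.1]
  have hcol : colSpace X ≤ colSpace (A * X) := by
    rw [colSpace_mul, hX.2.1, ← colSpace_mul, ← pow_succ', colSpace_pow_succ_eq_of_rank_eq hInd.1]
  simpa using mul_mul_eq_of_colSpace_le hidem hcol

end Index

/-- `A^{#_m} A A^{#_m} = A^{#_m}` (outer inverse). -/
theorem stmt_4 {n k m : ℕ} (hm : 1 ≤ m)
    (A CEP AmDag : Matrix (Fin n) (Fin n) ℂ)
    (hInd : HasIndex A k)
    (hCEP : IsCoreEP A CEP k)
    (hMP : MoorePenroseOf (A ^ m) AmDag) :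
    (CEP ^ (m + 1) * A ^ m * (A ^ m * AmDag)) * A *
      (CEP ^ (m + 1) * A ^ m * (A ^ m * AmDag)) =
      CEP ^ (m + 1) * A ^ m * (A ^ m * AmDag) := by
  refine weakCoreForm_mul_mul_self hCEP.1 (hCEP.mul_mul_self hInd) ?_ hm
  exact mul_mul_eq_of_colSpace_le hMP.1 (hCEP.2.1 ▸ hInd.colSpace_le_pow m)
end

section
/- Let A be an n×n complex matrix of index k and let m ≥ 1 be an integer. Then the null space of A^{#_m} equals the null space of (A^k)* A^m P_{A^m}, i.e., N(A^{#_m}) = N((A^k)* A^m P_{A^m}). -/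
open Matrix

/-!
For the core-EP inverse `X`, taking orthogonal complements in `R(Xᴴ) = R(A^k)` gives
`N(X) = N((A^k)ᴴ)`. Together with `R(X) = R(A^k)` this makes the range and the null space of `X`
orthogonal, so `N(X^(m+1)) = N(X)`. The two products thus have left factors `X^(m+1)` and
`(A^k)ᴴ` with the same null space, and share the right factor `A^m P_{A^m}`.
-/

theorem Module.End.ker_pow_succ_eq_ker_of_disjoint {R M : Type*} [Semiring R] [AddCommMonoid M]
    [Module R M] {f : Module.End R M} (h : Disjoint (LinearMap.range f) (LinearMap.ker f))
    (j : ℕ) : LinearMap.ker (f ^ (j + 1)) = LinearMap.ker f := by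
  induction j with
  | zero => rw [pow_one]
  | succ j ih =>
    ext x
    refine ⟨fun hx => ?_, fun hx => ?_⟩
    · have hfx : f x ∈ LinearMap.ker f := by
        rw [← ih, LinearMap.mem_ker, ← Module.End.mul_apply, ← pow_succ]
        exact hx
      exact (Submodule.disjoint_def.mp h) _ (LinearMap.mem_range_self f x) hfx
    · rw [LinearMap.mem_ker, pow_succ, Module.End.mul_apply, LinearMap.mem_ker.mp hx, map_zero]

namespace Matrix

section StarOrdered

variable {R m n : Type*} [CommRing R] [PartialOrder R] [StarRing R] [StarOrderedRing R]
  [NoZeroDivisors R] [Fintype m] [Fintype n]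

theorem mem_ker_mulVecLin_conjTranspose_iff (B : Matrix m n R) (x : m → R) :
    x ∈ LinearMap.ker Bᴴ.mulVecLin ↔ ∀ v ∈ LinearMap.range B.mulVecLin, star x ⬝ᵥ v = 0 := by
  have adjoint : ∀ y, star x ⬝ᵥ (B *ᵥ y) = star (Bᴴ *ᵥ x) ⬝ᵥ y := fun y => by
    rw [dotProduct_mulVec, star_mulVec, conjTranspose_conjTranspose]
  simp only [LinearMap.mem_ker, mulVecLin_apply, LinearMap.mem_range, forall_exists_index,
    forall_apply_eq_imp_iff, adjoint]
  refine ⟨fun hx y => by rw [hx, star_zero, zero_dotProduct], fun hx => ?_⟩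
  exact dotProduct_star_self_eq_zero.mp (hx _)

theorem ker_mulVecLin_conjTranspose_congr {B C : Matrix m n R}
    (h : LinearMap.range B.mulVecLin = LinearMap.range C.mulVecLin) :
    LinearMap.ker Bᴴ.mulVecLin = LinearMap.ker Cᴴ.mulVecLin := by
  ext x
  rw [mem_ker_mulVecLin_conjTranspose_iff, mem_ker_mulVecLin_conjTranspose_iff, h]

theorem disjoint_range_mulVecLin_ker_mulVecLin_conjTranspose (B : Matrix m n R) :
    Disjoint (LinearMap.range B.mulVecLin) (LinearMap.ker Bᴴ.mulVecLin) :=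
  Submodule.disjoint_def.mpr fun v hv hv' =>
    dotProduct_star_self_eq_zero.mp ((mem_ker_mulVecLin_conjTranspose_iff B v).mp hv' v hv)

end StarOrdered

theorem ker_mulVecLin_mul_congr {R l m n : Type*} [CommSemiring R] [Fintype m] [Fintype n]
    {M N : Matrix l m R} (h : LinearMap.ker M.mulVecLin = LinearMap.ker N.mulVecLin)
    (B : Matrix m n R) : LinearMap.ker (M * B).mulVecLin = LinearMap.ker (N * B).mulVecLin := by
  simp only [mulVecLin_mul, LinearMap.ker_comp, h]

end Matrix

open scoped ComplexOrder

theorem IsCoreEP.nullSpace_eq {n k : ℕ} {A X : Matrix (Fin n) (Fin n) ℂ} (hX : IsCoreEP A X k) :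
    nullSpace X = nullSpace (A ^ k)ᴴ := by
  simpa only [nullSpace, conjTranspose_conjTranspose] using
    ker_mulVecLin_conjTranspose_congr hX.2.2

theorem IsCoreEP.nullSpace_pow_succ {n k : ℕ} {A X : Matrix (Fin n) (Fin n) ℂ}
    (hX : IsCoreEP A X k) (j : ℕ) : nullSpace (X ^ (j + 1)) = nullSpace (A ^ k)ᴴ := by
  have hrange : LinearMap.range X.mulVecLin = LinearMap.range (A ^ k).mulVecLin := hX.2.1
  have hdisj : Disjoint (LinearMap.range X.mulVecLin) (LinearMap.ker X.mulVecLin) := by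
    rw [hrange, ← nullSpace, hX.nullSpace_eq]
    exact disjoint_range_mulVecLin_ker_mulVecLin_conjTranspose (A ^ k)
  rw [← hX.nullSpace_eq, nullSpace, ← toLin'_apply', toLin'_pow]
  exact Module.End.ker_pow_succ_eq_ker_of_disjoint (by rwa [toLin'_apply']) j

theorem stmt_11_general {n k m : ℕ}
    (A CEP AmDag : Matrix (Fin n) (Fin n) ℂ)
    (hCEP : IsCoreEP A CEP k) :
    nullSpace (CEP ^ (m + 1) * A ^ m * (A ^ m * AmDag)) =
      nullSpace ((A ^ k)ᴴ * A ^ m * (A ^ m * AmDag)) := by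
  simp only [nullSpace, mul_assoc (CEP ^ (m + 1)), mul_assoc (A ^ k)ᴴ]
  exact ker_mulVecLin_mul_congr (hCEP.nullSpace_pow_succ m) _

/-- `N(A^{#_m}) = N((A^k)ᴴ A^m P_{A^m})`. -/
theorem stmt_11 {n k m : ℕ} (hm : 1 ≤ m)
    (A CEP AmDag : Matrix (Fin n) (Fin n) ℂ)
    (hInd : HasIndex A k)
    (hCEP : IsCoreEP A CEP k)
    (hMP : MoorePenroseOf (A ^ m) AmDag) :
    nullSpace (CEP ^ (m + 1) * A ^ m * (A ^ m * AmDag)) =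
      nullSpace ((A ^ k)ᴴ * A ^ m * (A ^ m * AmDag)) :=
  stmt_11_general A CEP AmDag hCEP
end

section
/- Let A be an n×n complex matrix and let m ≥ 1 be an integer. Then A A^{#_m} A = A (i.e., the m-weak core inverse A^{#_m} is an inner inverse of A) if and only if Ind(A) ≤ 1, i.e., rank(A) = rank(A^2). -/
open Matrix

/-!
If `Ind A ≤ 1` then `R(A^j) = R(A)` for every `j ≥ 1`, so the core-EP inverse `X` satisfies
`R(X) = R(A)`. Then `XA`, `AX` and `A^m (A^m)†` are idempotents whose ranges contain `R(A)`,
which gives `XA·A = A`, `AX·A = A` and `A^m (A^m)† A = A`; these collapse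
`A X^{m+1} A^m A^m (A^m)† A` to `A X A = A`.
Conversely, `A = A X (⋯)` forces `R(A) ⊆ R(AX) = R(A^{k+1})`, and since the ranks of the powers
of `A` are constant from `k` on, `rank A ≤ rank A^{k+2} ≤ rank A²`.
-/

theorem pow_succ_mul_pow_succ_of_mul_mul_eq {M : Type*} [Monoid M] {x a : M}
    (h : x * a * a = a) (j : ℕ) : x ^ (j + 1) * a ^ (j + 1) = x * a := by
  induction j with
  | zero => simp only [zero_add, pow_one]
  | succ j ih =>
    calc x ^ (j + 2) * a ^ (j + 2) = x ^ (j + 1) * (x * a * a) * a ^ j := by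
          rw [pow_succ x (j + 1), pow_succ' a (j + 1), pow_succ' a j]
          simp only [mul_assoc]
      _ = x ^ (j + 1) * a ^ (j + 1) := by rw [h, mul_assoc, ← pow_succ']
      _ = x * a := ih

namespace colSpace

variable {n : ℕ}

theorem mul (A B : Matrix (Fin n) (Fin n) ℂ) :
    colSpace (A * B) = (colSpace B).map A.mulVecLin := by
  rw [colSpace, colSpace, mulVecLin_mul, LinearMap.range_comp]

theorem mul_le (A B : Matrix (Fin n) (Fin n) ℂ) : colSpace (A * B) ≤ colSpace A := by
  rw [mul]
  exact LinearMap.map_le_range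

theorem finrank_eq_rank (A : Matrix (Fin n) (Fin n) ℂ) :
    Module.finrank ℂ (colSpace A) = A.rank :=
  rfl

theorem rank_le_of_le {A B : Matrix (Fin n) (Fin n) ℂ} (h : colSpace A ≤ colSpace B) :
    A.rank ≤ B.rank :=
  Submodule.finrank_mono h

theorem eq_of_le_of_rank_le {A B : Matrix (Fin n) (Fin n) ℂ} (hle : colSpace A ≤ colSpace B)
    (hrank : B.rank ≤ A.rank) : colSpace A = colSpace B :=
  Submodule.eq_of_le_of_finrank_le hle hrank

theorem exists_eq_mul_of_le {A G : Matrix (Fin n) (Fin n) ℂ} (h : colSpace A ≤ colSpace G) :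
    ∃ C, A = G * C := by
  choose c hc using fun j => h (LinearMap.mem_range_self A.mulVecLin (Pi.single j 1))
  refine ⟨of fun i j => c j i, ?_⟩
  ext i j
  have hcol := congrFun (hc j) i
  simp only [mulVecLin_apply, mulVec_single_one, col_apply] at hcol
  rw [← hcol]
  rfl

theorem _root_.IsIdempotentElem.mul_eq_self_of_colSpace_le {E A : Matrix (Fin n) (Fin n) ℂ}
    (hE : IsIdempotentElem E) (h : colSpace A ≤ colSpace E) : E * A = A := by
  obtain ⟨C, rfl⟩ := exists_eq_mul_of_le h
  rw [← mul_assoc, hE.eq]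

theorem pow_succ (A : Matrix (Fin n) (Fin n) ℂ) (j : ℕ) :
    colSpace (A ^ (j + 1)) = (colSpace (A ^ j)).map A.mulVecLin := by
  rw [_root_.pow_succ', mul]

theorem pow_succ_eq_of_rank_eq {A : Matrix (Fin n) (Fin n) ℂ} {j : ℕ}
    (h : (A ^ j).rank = (A ^ (j + 1)).rank) : colSpace (A ^ (j + 1)) = colSpace (A ^ j) :=
  eq_of_le_of_rank_le (by rw [_root_.pow_succ]; exact mul_le _ _) h.le

theorem pow_add_eq_of_pow_succ_eq {A : Matrix (Fin n) (Fin n) ℂ} {j : ℕ}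
    (h : colSpace (A ^ (j + 1)) = colSpace (A ^ j)) (i : ℕ) :
    colSpace (A ^ (j + i)) = colSpace (A ^ j) := by
  induction i with
  | zero => rfl
  | succ i ih => rw [← add_assoc, pow_succ, ih, ← pow_succ, h]

theorem le_pow_of_sq_eq {A : Matrix (Fin n) (Fin n) ℂ} (h : colSpace (A ^ 2) = colSpace A)
    (m : ℕ) : colSpace A ≤ colSpace (A ^ m) := by
  cases m with
  | zero => simpa only [pow_zero, one_mul] using mul_le 1 A
  | succ m =>
    rw [add_comm, pow_add_eq_of_pow_succ_eq (j := 1) (by rwa [pow_one]) m, pow_one]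

end colSpace

section

variable {n : ℕ} {A X : Matrix (Fin n) (Fin n) ℂ} {k : ℕ}

theorem HasIndex.colSpace_pow_eq_of_rank_eq_rank_sq (hInd : HasIndex A k)
    (h : A.rank = (A ^ 2).rank) : colSpace (A ^ k) = colSpace A := by
  have hk : k ≤ 1 := by
    by_contra! hk
    exact hInd.2 1 hk (by rwa [pow_one])
  interval_cases k
  · simpa only [zero_add, pow_one] using (colSpace.pow_succ_eq_of_rank_eq hInd.1).symm
  · rw [pow_one]

theorem rank_eq_rank_sq_of_mul_mul_eq_self (hInd : HasIndex A k)
    (hX : colSpace X = colSpace (A ^ k)) {Y : Matrix (Fin n) (Fin n) ℂ} (h : A * X * Y = A) :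
    A.rank = (A ^ 2).rank := by
  have hA : colSpace A ≤ colSpace (A ^ (k + 1)) := by
    calc colSpace A = colSpace (A * X * Y) := by rw [h]
      _ ≤ colSpace (A * X) := colSpace.mul_le _ _
      _ = colSpace (A ^ (k + 1)) := by rw [colSpace.pow_succ, ← hX, ← colSpace.mul]
  have hstable : colSpace (A ^ (k + 2)) = colSpace (A ^ k) :=
    colSpace.pow_add_eq_of_pow_succ_eq (colSpace.pow_succ_eq_of_rank_eq hInd.1) 2
  refine le_antisymm ?_ (by rw [sq]; exact rank_mul_le_left A A)
  calc A.rank ≤ (A ^ (k + 1)).rank := colSpace.rank_le_of_le hA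
    _ = (A ^ (2 + k)).rank := by
      rw [← hInd.1, ← colSpace.finrank_eq_rank, ← colSpace.finrank_eq_rank, add_comm 2,
        hstable]
    _ ≤ (A ^ 2).rank := by rw [pow_add]; exact rank_mul_le_left _ _

theorem mul_weakCore_mul_eq_self (hXAX : X * A * X = X) (hX : colSpace X = colSpace A)
    (hA2 : colSpace (A ^ 2) = colSpace A) {m : ℕ} {G : Matrix (Fin n) (Fin n) ℂ}
    (hG : A ^ m * G * A ^ m = A ^ m) :
    A * (X ^ (m + 1) * A ^ m * (A ^ m * G)) * A = A := by
  have hXA : X * A * A = A := by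
    refine IsIdempotentElem.mul_eq_self_of_colSpace_le
      (by rw [IsIdempotentElem, ← mul_assoc, hXAX]) ?_
    calc colSpace A = colSpace (X * A * X) := by rw [hXAX, hX]
      _ ≤ colSpace (X * A) := colSpace.mul_le _ _
  have hAX : A * X * A = A := by
    refine IsIdempotentElem.mul_eq_self_of_colSpace_le
      (by rw [IsIdempotentElem, mul_assoc A X, ← mul_assoc X, hXAX]) ?_
    rw [colSpace.mul, hX, ← colSpace.mul, ← sq, hA2]
  have hGA : A ^ m * G * A = A := by
    refine IsIdempotentElem.mul_eq_self_of_colSpace_le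
      (by rw [IsIdempotentElem, ← mul_assoc, hG]) ?_
    calc colSpace A ≤ colSpace (A ^ m) := colSpace.le_pow_of_sq_eq hA2 m
      _ = colSpace (A ^ m * G * A ^ m) := by rw [hG]
      _ ≤ colSpace (A ^ m * G) := colSpace.mul_le _ _
  calc A * (X ^ (m + 1) * A ^ m * (A ^ m * G)) * A
      = A * (X ^ (m + 1) * (A ^ m * (A ^ m * G * A))) := by simp only [mul_assoc]
    _ = A * (X ^ (m + 1) * A ^ (m + 1)) := by rw [hGA, ← pow_succ]
    _ = A := by rw [pow_succ_mul_pow_succ_of_mul_mul_eq hXA, ← mul_assoc, hAX]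

end

theorem stmt_15_general {n k m : ℕ}
    (A CEP AmDag : Matrix (Fin n) (Fin n) ℂ)
    (hInd : HasIndex A k)
    (hCEP : IsCoreEP A CEP k)
    (hMP : MoorePenroseOf (A ^ m) AmDag) :
    A * (CEP ^ (m + 1) * A ^ m * (A ^ m * AmDag)) * A = A ↔
      A.rank = (A ^ 2).rank := by
  obtain ⟨hXAX, hX, -⟩ := hCEP
  constructor
  · intro h
    refine rank_eq_rank_sq_of_mul_mul_eq_self hInd hX
      (Y := CEP ^ m * A ^ m * (A ^ m * AmDag) * A) ?_
    calc A * CEP * (CEP ^ m * A ^ m * (A ^ m * AmDag) * A)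
        = A * (CEP ^ (m + 1) * A ^ m * (A ^ m * AmDag)) * A := by
          rw [pow_succ']; simp only [mul_assoc]
      _ = A := h
  · intro h
    have hA2 : colSpace (A ^ 2) = colSpace A := by
      simpa only [pow_one] using colSpace.pow_succ_eq_of_rank_eq (j := 1) (by rwa [pow_one])
    exact mul_weakCore_mul_eq_self hXAX
      (hX.trans (hInd.colSpace_pow_eq_of_rank_eq_rank_sq h)) hA2 hMP.1

/-- `A A^{#_m} A = A` iff `Ind(A) ≤ 1`, i.e. `rank A = rank A²`. -/
theorem stmt_15 {n k m : ℕ} (hm : 1 ≤ m)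
    (A CEP AmDag : Matrix (Fin n) (Fin n) ℂ)
    (hInd : HasIndex A k)
    (hCEP : IsCoreEP A CEP k)
    (hMP : MoorePenroseOf (A ^ m) AmDag) :
    A * (CEP ^ (m + 1) * A ^ m * (A ^ m * AmDag)) * A = A ↔
      A.rank = (A ^ 2).rank :=
  stmt_15_general A CEP AmDag hInd hCEP hMP
end
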